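/- arXiv:2101.07728 — 2 statements merged into one kernel-verified Lean document; each statement's English description precedes it below -/
import Mathlib

section
/- Let f, h : ℝ → ℝ be bounded Lipschitz functions and c_∞ > 0 a constant such that c₀ := inf_x (c_∞ + f(x) - h(x)) > 0 (so the graphs of c_∞ + f and h are at positive distance). Then the operator C₁ defined by C₁[ω](x) = ∫_ℝ ω(x-s) / (s² + (c_∞ + f(x) - h(x-s))²) ds is a bounded linear operator on L²(ℝ), with operator norm bounded by a constant depending only on c₀ and ‖h'‖_∞. -/
/-!
By the Lipschitz bound on `h`, the point `(s, c_∞ + f(x) - h(x-s))` lies above the graph of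
`c₀ - L|s|`, whose distance from the origin is `γ = c₀ / √(1 + L²)`. Hence the denominator is at
least `max(s², γ²) ≥ (s² + γ²)/2`, so the kernel is dominated, uniformly in `x`, by `2/(s² + γ²)`,
a multiple `2π/γ` of the Cauchy density of scale `γ`. An integral operator whose kernel is
dominated by a convolution kernel `G ∈ L¹` is bounded on `Lᵖ` with norm at most `‖G‖₁`
(Hölder in `s` with the weight `G`, then Tonelli and translation invariance), which gives the
bound `2π√(1 + L²)/c₀`.
-/

open MeasureTheory ProbabilityTheory Real
open scoped ENNReal NNReal

theorem lintegral_mul_rpow_le {α : Type*} [MeasurableSpace α] {μ : Measure α}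
    {G W : α → ℝ≥0∞} (hG : AEMeasurable G μ) (hW : AEMeasurable W μ) {p : ℝ} (hp : 1 ≤ p) :
    (∫⁻ a, G a * W a ∂μ) ^ p ≤ (∫⁻ a, G a ∂μ) ^ (p - 1) * ∫⁻ a, G a * W a ^ p ∂μ := by
  have hp₀ : 0 < p := by linarith
  have hq : 0 ≤ 1 - p⁻¹ := sub_nonneg.2 (inv_le_one_of_one_le₀ hp)
  have hsplit : ∀ a, G a * W a = G a ^ (1 - p⁻¹) * (G a * W a ^ p) ^ p⁻¹ := fun a => by
    rw [ENNReal.mul_rpow_of_nonneg _ _ (inv_nonneg.2 hp₀.le), ← ENNReal.rpow_mul,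
      mul_inv_cancel₀ hp₀.ne', ENNReal.rpow_one, ← mul_assoc,
      ← ENNReal.rpow_add_of_nonneg _ _ hq (inv_nonneg.2 hp₀.le), sub_add_cancel,
      ENNReal.rpow_one]
  have holder := ENNReal.lintegral_mul_norm_pow_le hG (hG.mul (hW.pow_const p)) hq
    (inv_nonneg.2 hp₀.le) (sub_add_cancel 1 p⁻¹)
  calc (∫⁻ a, G a * W a ∂μ) ^ p
      = (∫⁻ a, G a ^ (1 - p⁻¹) * (G a * W a ^ p) ^ p⁻¹ ∂μ) ^ p := by rw [lintegral_congr hsplit]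
    _ ≤ ((∫⁻ a, G a ∂μ) ^ (1 - p⁻¹) * (∫⁻ a, G a * W a ^ p ∂μ) ^ p⁻¹) ^ p :=
        ENNReal.rpow_le_rpow holder hp₀.le
    _ = (∫⁻ a, G a ∂μ) ^ (p - 1) * ∫⁻ a, G a * W a ^ p ∂μ := by
        rw [ENNReal.mul_rpow_of_nonneg _ _ hp₀.le, ← ENNReal.rpow_mul, ← ENNReal.rpow_mul,
          inv_mul_cancel₀ hp₀.ne', ENNReal.rpow_one, sub_mul, one_mul,
          inv_mul_cancel₀ hp₀.ne']

section Young

variable {α : Type*} [AddGroup α] [MeasurableSpace α] [MeasurableAdd₂ α] [MeasurableNeg α]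
  {μ : Measure α} [SFinite μ] [μ.IsAddRightInvariant]

theorem lintegral_rpow_lintegral_mul_sub_le {G W : α → ℝ≥0∞} (hG : AEMeasurable G μ)
    (hW : AEMeasurable W μ) {p : ℝ} (hp : 1 ≤ p) :
    ∫⁻ x, (∫⁻ s, G s * W (x - s) ∂μ) ^ p ∂μ ≤ (∫⁻ s, G s ∂μ) ^ p * ∫⁻ x, W x ^ p ∂μ := by
  have hWp : AEMeasurable (fun q : α × α => G q.2 * W (q.1 - q.2) ^ p) (μ.prod μ) :=
    hG.comp_snd.mul ((hW.comp_quasiMeasurePreserving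
      (quasiMeasurePreserving_sub_of_right_invariant μ μ)).pow_const p)
  calc ∫⁻ x, (∫⁻ s, G s * W (x - s) ∂μ) ^ p ∂μ
      ≤ ∫⁻ x, (∫⁻ s, G s ∂μ) ^ (p - 1) * ∫⁻ s, G s * W (x - s) ^ p ∂μ ∂μ :=
        lintegral_mono fun x => lintegral_mul_rpow_le hG
          (hW.comp_quasiMeasurePreserving
            (quasiMeasurePreserving_sub_left_of_right_invariant μ x)) hp
    _ = (∫⁻ s, G s ∂μ) ^ (p - 1) * ∫⁻ s, ∫⁻ x, G s * W (x - s) ^ p ∂μ ∂μ := by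
        rw [lintegral_const_mul'' _ hWp.lintegral_prod_right', lintegral_lintegral_swap hWp]
    _ = (∫⁻ s, G s ∂μ) ^ (p - 1) * ((∫⁻ s, G s ∂μ) * ∫⁻ x, W x ^ p ∂μ) := by
        rw [← lintegral_mul_const'' _ hG]
        refine congrArg _ (lintegral_congr fun s => ?_)
        rw [lintegral_const_mul'' (f := fun x => W (x - s) ^ p) _ ((hW.comp_quasiMeasurePreserving
          (measurePreserving_sub_right μ s).quasiMeasurePreserving).pow_const p),
          lintegral_sub_right_eq_self (fun x => W x ^ p) s]
    _ = (∫⁻ s, G s ∂μ) ^ p * ∫⁻ x, W x ^ p ∂μ := by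
        have hpow : (∫⁻ s, G s ∂μ) ^ (p - 1) * ∫⁻ s, G s ∂μ = (∫⁻ s, G s ∂μ) ^ p := by
          simpa using (ENNReal.rpow_add_of_nonneg (x := ∫⁻ s, G s ∂μ) (p - 1) 1
            (sub_nonneg.2 hp) zero_le_one).symm
        rw [← mul_assoc, hpow]

theorem eLpNorm_integral_le_lintegral_mul_eLpNorm {E F : Type*} [NormedAddCommGroup E]
    [NormedAddCommGroup F] [NormedSpace ℝ F] {K : α → α → F} {ω : α → E} {G : α → ℝ≥0∞}
    (hω : AEStronglyMeasurable ω μ) (hG : AEMeasurable G μ)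
    (hK : ∀ x s, ‖K x s‖ₑ ≤ G s * ‖ω (x - s)‖ₑ) {p : ℝ≥0∞} (hp : 1 ≤ p) (hp_top : p ≠ ⊤) :
    eLpNorm (fun x => ∫ s, K x s ∂μ) p μ ≤ (∫⁻ s, G s ∂μ) * eLpNorm ω p μ := by
  have hp₀ : p ≠ 0 := (zero_lt_one.trans_le hp).ne'
  have hq : 1 ≤ p.toReal := by
    simpa using ENNReal.toReal_mono hp_top hp
  have hq₀ : 0 < p.toReal := zero_lt_one.trans_le hq
  rw [eLpNorm_eq_lintegral_rpow_enorm_toReal hp₀ hp_top,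
    eLpNorm_eq_lintegral_rpow_enorm_toReal hp₀ hp_top]
  have hpointwise : ∀ x, ‖∫ s, K x s ∂μ‖ₑ ≤ ∫⁻ s, G s * ‖ω (x - s)‖ₑ ∂μ := fun x =>
    (enorm_integral_le_lintegral_enorm _).trans (lintegral_mono (hK x))
  calc (∫⁻ x, ‖∫ s, K x s ∂μ‖ₑ ^ p.toReal ∂μ) ^ (1 / p.toReal)
      ≤ (∫⁻ x, (∫⁻ s, G s * ‖ω (x - s)‖ₑ ∂μ) ^ p.toReal ∂μ) ^ (1 / p.toReal) := by
        gcongr with x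
        exact hpointwise x
    _ ≤ ((∫⁻ s, G s ∂μ) ^ p.toReal * ∫⁻ x, ‖ω x‖ₑ ^ p.toReal ∂μ) ^ (1 / p.toReal) := by
        gcongr
        exact lintegral_rpow_lintegral_mul_sub_le hG hω.enorm hq
    _ = (∫⁻ s, G s ∂μ) * (∫⁻ x, ‖ω x‖ₑ ^ p.toReal ∂μ) ^ (1 / p.toReal) := by
        rw [ENNReal.mul_rpow_of_nonneg _ _ (by positivity), ← ENNReal.rpow_mul,
          mul_one_div_cancel hq₀.ne', ENNReal.rpow_one]

end Young

theorem sq_le_one_add_sq_mul_sq_add_sq {c L s d : ℝ} (hc : 0 ≤ c) (hd : c - L * |s| ≤ d) :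
    c ^ 2 ≤ (1 + L ^ 2) * (s ^ 2 + d ^ 2) := by
  rcases le_or_gt (c - L * |s|) 0 with hu | hu
  · nlinarith [sq_abs s, sq_nonneg d, sq_nonneg (L * s)]
  · have hd_sq : (c - L * |s|) ^ 2 ≤ d ^ 2 := pow_le_pow_left₀ hu.le hd 2
    nlinarith [sq_abs s, sq_nonneg (L * (c - L * |s|) - |s|)]

theorem inv_sq_add_sq_le_cauchyPDFReal {γ : ℝ≥0} (hγ : γ ≠ 0) {s d : ℝ}
    (h : (γ : ℝ) ^ 2 ≤ s ^ 2 + d ^ 2) :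
    (s ^ 2 + d ^ 2)⁻¹ ≤ 2 * π / γ * cauchyPDFReal 0 γ s := by
  have hγ₀ : (0 : ℝ) < γ := NNReal.coe_pos.2 (pos_iff_ne_zero.2 hγ)
  have hcauchy : 2 * π / γ * cauchyPDFReal 0 γ s = 2 / (s ^ 2 + γ ^ 2) := by
    rw [cauchyPDFReal_def, sub_zero]
    field_simp
  have hpos : 0 < s ^ 2 + d ^ 2 := lt_of_lt_of_le (by positivity) h
  rw [hcauchy, ← one_div, div_le_div_iff₀ hpos (by positivity)]
  nlinarith [sq_nonneg d]

theorem enorm_div_sq_add_sq_le {γ : ℝ≥0} (hγ : γ ≠ 0) {s d : ℝ}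
    (h : (γ : ℝ) ^ 2 ≤ s ^ 2 + d ^ 2) (v : ℝ) :
    ‖v / (s ^ 2 + d ^ 2)‖ₑ ≤ ENNReal.ofReal (2 * π / γ) * cauchyPDF 0 γ s * ‖v‖ₑ := by
  have hpos : 0 < s ^ 2 + d ^ 2 := lt_of_lt_of_le (by positivity) h
  rw [div_eq_mul_inv, enorm_mul, mul_comm, cauchyPDF_def,
    ← ENNReal.ofReal_mul (by positivity), Real.enorm_of_nonneg (inv_nonneg.2 hpos.le)]
  gcongr
  exact inv_sq_add_sq_le_cauchyPDFReal hγ h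

theorem C1_bounded_on_L2_general (c₀ L : ℝ) (hc₀ : 0 < c₀) :
    ∃ C : ℝ, 0 < C ∧
      ∀ (c_inf : ℝ) (f h : ℝ → ℝ), 0 < c_inf →
        (∃ Mf, ∀ x, |f x| ≤ Mf) → (∃ Mh, ∀ x, |h x| ≤ Mh) →
        (∃ Kf, ∀ x y, |f x - f y| ≤ Kf * |x - y|) →
        (∀ x y, |h x - h y| ≤ L * |x - y|) →
        (∀ x, c₀ ≤ c_inf + f x - h x) →
        ∀ ω : ℝ → ℝ, MemLp ω 2 volume →
          eLpNorm
              (fun x : ℝ => ∫ s : ℝ, ω (x - s) / (s ^ 2 + (c_inf + f x - h (x - s)) ^ 2))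
              2 volume
            ≤ ENNReal.ofReal C * eLpNorm ω 2 volume := by
  set γ : ℝ≥0 := ⟨c₀ / √(1 + L ^ 2), by positivity⟩
  have hγ : γ ≠ 0 := by
    rw [← NNReal.coe_ne_zero]
    exact (div_pos hc₀ (by positivity)).ne'
  have hγ_sq : (γ : ℝ) ^ 2 = c₀ ^ 2 / (1 + L ^ 2) := by
    change (c₀ / √(1 + L ^ 2)) ^ 2 = _
    rw [div_pow, Real.sq_sqrt (by positivity)]
  refine ⟨2 * π / γ, by positivity, fun c_inf f h _ _ _ _ hLip hdist ω hω => ?_⟩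
  have hsep : ∀ x s, (γ : ℝ) ^ 2 ≤ s ^ 2 + (c_inf + f x - h (x - s)) ^ 2 := by
    intro x s
    rw [hγ_sq, div_le_iff₀ (by positivity), mul_comm]
    refine sq_le_one_add_sq_mul_sq_add_sq hc₀.le ?_
    have hshift := hLip (x - s) x
    rw [sub_sub_cancel_left, abs_neg] at hshift
    linarith [hdist x, (abs_le.mp hshift).2]
  have hbound := eLpNorm_integral_le_lintegral_mul_eLpNorm hω.aestronglyMeasurable
    (by fun_prop) (fun x s => enorm_div_sq_add_sq_le hγ (hsep x s) (ω (x - s))) one_le_two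
    ENNReal.ofNat_ne_top
  rwa [lintegral_const_mul _ (measurable_cauchyPDF 0 γ), lintegral_cauchyPDF_eq_one 0 hγ,
    mul_one] at hbound

/-- The operator `C₁[ω](x) = ∫ ω(x-s)/(s² + (c_∞ + f(x) - h(x-s))²) ds` is bounded on `L²(ℝ)`
when `f, h` are bounded Lipschitz functions whose graphs (shifted by `c_∞`) stay at distance
`c₀ > 0`; the operator norm depends only on `c₀` and the Lipschitz constant `L` of `h`. -/
theorem C1_bounded_on_L2 (c₀ L : ℝ) (hc₀ : 0 < c₀) (hL : 0 ≤ L) :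
    ∃ C : ℝ, 0 < C ∧
      ∀ (c_inf : ℝ) (f h : ℝ → ℝ), 0 < c_inf →
        (∃ Mf, ∀ x, |f x| ≤ Mf) → (∃ Mh, ∀ x, |h x| ≤ Mh) →
        (∃ Kf, ∀ x y, |f x - f y| ≤ Kf * |x - y|) →
        (∀ x y, |h x - h y| ≤ L * |x - y|) →
        (∀ x, c₀ ≤ c_inf + f x - h x) →
        ∀ ω : ℝ → ℝ, MemLp ω 2 volume →
          eLpNorm
              (fun x : ℝ => ∫ s : ℝ, ω (x - s) / (s ^ 2 + (c_inf + f x - h (x - s)) ^ 2))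
              2 volume
            ≤ ENNReal.ofReal C * eLpNorm ω 2 volume :=
  C1_bounded_on_L2_general c₀ L hc₀
end

section
/- Let f : ℝ → ℝ be Lipschitz and α ∈ (0,1). For ζ in the open upper region Ω₊ = {(x,y) : y > f(x)}, let ζ_Γ ∈ Γ_f = {(x,f(x))} realize the distance d(ζ) = |ζ - ζ_Γ| = dist(ζ, Γ_f). Then ∫_{Γ_f} |ξ - ζ_Γ|^α / |ξ - ζ|² |dξ| ≤ 9(1 + ‖f'‖_∞) ∫_ℝ (|s| + d(ζ))^{α-2} ds = C(α, ‖f'‖_∞) d(ζ)^{α-1}, where the arclength integral over Γ_f is parameterized as ξ = (s + x_Γ, f(s + x_Γ)). -/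
/-!
Write `d = dist(ζ, ζ_Γ)`. Minimality of `ζ_Γ` and the triangle inequality give
`|s| + d ≤ |ξ - ζ_Γ| + d ≤ 3 |ξ - ζ|`, so the kernel `|ξ - ζ_Γ|^α / |ξ - ζ|²` is at most
`9 (|s| + d)^{α-2}` (the exponent `α - 2` is negative), while the arclength factor
`√(1 + f'²)` is at most `1 + ‖f'‖_∞`. The integral `∫_ℝ (|s| + d)^{α-2} ds` is computed
explicitly by folding it onto `(0, ∞)` and shifting by `d`.
-/

/-- A point `(a, b)` of the plane, encoded as the complex number `a + b i` (so that the
norm is the Euclidean norm of `ℝ²`). -/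
noncomputable def planePt (a b : ℝ) : ℂ := Complex.ofReal a + Complex.ofReal b * Complex.I

open MeasureTheory Set Real

theorem integral_Ioi_rpow_add {a d : ℝ} (ha : a < -1) (hd : 0 < d) :
    ∫ s in Ioi (0 : ℝ), (s + d) ^ a = -d ^ (a + 1) / (a + 1) := by
  have hshift := (measurePreserving_add_right volume d).setIntegral_preimage_emb
    (measurableEmbedding_addRight d) (fun s : ℝ => s ^ a) (Ioi d)
  rw [integral_Ioi_rpow_of_lt ha hd] at hshift
  simpa using hshift

theorem integral_rpow_abs_add {a d : ℝ} (ha : a < -1) (hd : 0 < d) :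
    ∫ s : ℝ, (|s| + d) ^ a = -2 * d ^ (a + 1) / (a + 1) := by
  rw [integral_comp_abs (f := fun s => (s + d) ^ a), integral_Ioi_rpow_add ha hd]
  ring

theorem rpow_div_sq_le_rpow_sub_two {α t u R : ℝ} (hα0 : 0 ≤ α) (hα2 : α ≤ 2)
    (ht : 0 ≤ t) (htR : t ≤ R) (hu : 0 < u) (huR : u ≤ R) :
    t ^ α / R ^ 2 ≤ u ^ (α - 2) := by
  have hR : 0 < R := hu.trans_le huR
  calc t ^ α / R ^ 2 ≤ R ^ α / R ^ 2 := by gcongr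
    _ = R ^ (α - 2) := by rw [rpow_sub hR, rpow_two]
    _ ≤ u ^ (α - 2) := rpow_le_rpow_of_nonpos hu huR (by linarith)

theorem dist_rpow_div_dist_sq_le {X : Type*} [PseudoMetricSpace X] {α t : ℝ} {ξ ζ ζ₀ : X}
    (hα0 : 0 ≤ α) (hα2 : α ≤ 2) (ht : 0 ≤ t) (htξ : t ≤ dist ξ ζ₀) (hd : 0 < dist ζ ζ₀)
    (hmin : dist ζ ζ₀ ≤ dist ζ ξ) :
    dist ξ ζ₀ ^ α / dist ξ ζ ^ 2 ≤ 9 * (t + dist ζ ζ₀) ^ (α - 2) := by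
  have hthree : dist ξ ζ₀ + dist ζ ζ₀ ≤ 3 * dist ξ ζ := by
    linarith [dist_triangle ξ ζ ζ₀, dist_comm ζ ξ]
  calc dist ξ ζ₀ ^ α / dist ξ ζ ^ 2 = 9 * (dist ξ ζ₀ ^ α / (3 * dist ξ ζ) ^ 2) := by ring
    _ ≤ 9 * (t + dist ζ ζ₀) ^ (α - 2) := by
      gcongr
      exact rpow_div_sq_le_rpow_sub_two hα0 hα2 dist_nonneg (by linarith) (by positivity)
        (by linarith)

theorem planePt_inj {a b a' b' : ℝ} : planePt a b = planePt a' b' ↔ a = a' ∧ b = b' := by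
  simp [planePt, Complex.ext_iff]

theorem abs_sub_le_dist_planePt (a b a' b' : ℝ) :
    |a - a'| ≤ dist (planePt a b) (planePt a' b') := by
  simpa [dist_eq_norm, planePt] using Complex.abs_re_le_norm (planePt a b - planePt a' b')

theorem graph_arclength_estimate_general (f : ℝ → ℝ) (K α : ℝ) (hα : α ∈ Set.Ioo (0 : ℝ) 1)
    (hK : ∀ x, |deriv f x| ≤ K)
    (x y xΓ : ℝ) (hy : f x < y)
    (hmin : ∀ x' : ℝ, ‖planePt x y - planePt xΓ (f xΓ)‖ ≤ ‖planePt x y - planePt x' (f x')‖) :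
    (∫ s : ℝ,
        (‖planePt (s + xΓ) (f (s + xΓ)) - planePt xΓ (f xΓ)‖ ^ α
            / ‖planePt (s + xΓ) (f (s + xΓ)) - planePt x y‖ ^ 2)
          * Real.sqrt (1 + deriv f (s + xΓ) ^ 2))
      ≤ 9 * (1 + K) * ∫ s : ℝ, (|s| + ‖planePt x y - planePt xΓ (f xΓ)‖) ^ (α - 2)
    ∧ (∫ s : ℝ, (|s| + ‖planePt x y - planePt xΓ (f xΓ)‖) ^ (α - 2))
        = (2 / (1 - α)) * ‖planePt x y - planePt xΓ (f xΓ)‖ ^ (α - 1) := by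
  obtain ⟨hα0, hα1⟩ := hα
  simp only [← dist_eq_norm] at hmin ⊢
  set d := dist (planePt x y) (planePt xΓ (f xΓ))
  have hd : 0 < d := dist_pos.2 fun h => hy.ne (by rw [(planePt_inj.1 h).1, (planePt_inj.1 h).2])
  have hintegral : ∫ s : ℝ, (|s| + d) ^ (α - 2) = 2 / (1 - α) * d ^ (α - 1) := by
    rw [integral_rpow_abs_add (by linarith) hd, show α - 2 + 1 = α - 1 by ring]
    field_simp [show 1 - α ≠ 0 by linarith, show α - 1 ≠ 0 by linarith]
    ring
  refine ⟨?_, hintegral⟩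
  have hbound : ∀ s : ℝ, dist (planePt (s + xΓ) (f (s + xΓ))) (planePt xΓ (f xΓ)) ^ α
      / dist (planePt (s + xΓ) (f (s + xΓ))) (planePt x y) ^ 2
      * √(1 + deriv f (s + xΓ) ^ 2) ≤ 9 * (1 + K) * (|s| + d) ^ (α - 2) := by
    intro s
    have hsqrt : √(1 + deriv f (s + xΓ) ^ 2) ≤ 1 + K := by
      simpa using (sqrt_one_add_norm_sq_le (deriv f (s + xΓ))).trans
        (by rw [Real.norm_eq_abs]; linarith [hK (s + xΓ)])
    have hs : |s| ≤ dist (planePt (s + xΓ) (f (s + xΓ))) (planePt xΓ (f xΓ)) := by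
      simpa using abs_sub_le_dist_planePt (s + xΓ) (f (s + xΓ)) xΓ (f xΓ)
    calc _ ≤ 9 * (|s| + d) ^ (α - 2) * (1 + K) :=
          mul_le_mul (dist_rpow_div_dist_sq_le hα0.le (by linarith) (abs_nonneg s) hs hd
            (hmin (s + xΓ))) hsqrt (sqrt_nonneg _) (by positivity)
      _ = 9 * (1 + K) * (|s| + d) ^ (α - 2) := by ring
  have hintegrable : Integrable fun s : ℝ => (|s| + d) ^ (α - 2) :=
    .of_integral_ne_zero (by rw [hintegral]; have := hα1; positivity)
  rw [← integral_const_mul]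
  exact integral_mono_of_nonneg (.of_forall fun s => by positivity) (hintegrable.const_mul _)
    (.of_forall hbound)

/-- Arclength estimate over the graph `Γ_f`: if `ζ = (x,y)` lies above the graph of the
Lipschitz function `f` (with `‖f'‖_∞ ≤ K`) and `ζ_Γ = (x_Γ, f(x_Γ))` realizes
`d = dist(ζ, Γ_f)`, then
`∫_{Γ_f} |ξ-ζ_Γ|^α/|ξ-ζ|² |dξ| ≤ 9(1+‖f'‖_∞) ∫_ℝ (|s|+d)^{α-2} ds = C(α,‖f'‖_∞) d^{α-1}`,
the arclength integral being parameterized by `ξ = (s + x_Γ, f(s + x_Γ))`. -/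
theorem graph_arclength_estimate (f : ℝ → ℝ) (K α : ℝ) (hα : α ∈ Set.Ioo (0 : ℝ) 1)
    (hf : Differentiable ℝ f) (hK : ∀ x, |deriv f x| ≤ K)
    (x y xΓ : ℝ) (hy : f x < y)
    (hmin : ∀ x' : ℝ, ‖planePt x y - planePt xΓ (f xΓ)‖ ≤ ‖planePt x y - planePt x' (f x')‖) :
    (∫ s : ℝ,
        (‖planePt (s + xΓ) (f (s + xΓ)) - planePt xΓ (f xΓ)‖ ^ α
            / ‖planePt (s + xΓ) (f (s + xΓ)) - planePt x y‖ ^ 2)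
          * Real.sqrt (1 + deriv f (s + xΓ) ^ 2))
      ≤ 9 * (1 + K) * ∫ s : ℝ, (|s| + ‖planePt x y - planePt xΓ (f xΓ)‖) ^ (α - 2)
    ∧ (∫ s : ℝ, (|s| + ‖planePt x y - planePt xΓ (f xΓ)‖) ^ (α - 2))
        = (2 / (1 - α)) * ‖planePt x y - planePt xΓ (f xΓ)‖ ^ (α - 1) :=
  graph_arclength_estimate_general f K α hα hK x y xΓ hy hmin
end
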